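/- Let (K^(n))_{n≥1} be a family of CPTNI monotone metrics and fix a complex n×n matrix X. Then the map ρ ↦ K^(n)_ρ(X, X) is monotonically decreasing on positive definite n×n matrices with trace at most 1: if ρ ≤ ρ' (with both ρ and ρ' positive definite and Tr ρ' ≤ 1), then K^(n)_{ρ'}(X, X) ≤ K^(n)_ρ(X, X). Moreover this map is convex: K^(n)_{pρ₁+(1-p)ρ₂}(X, X) ≤ p K^(n)_{ρ₁}(X, X) + (1-p) K^(n)_{ρ₂}(X, X) for 0 ≤ p ≤ 1. -/

import Mathlib

open Matrix ComplexOrder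

/-- Functional calculus for (Hermitian) matrices: apply `f` to each eigenvalue. -/
noncomputable def herCFC {n : ℕ} (f : ℝ → ℝ) (A : Matrix (Fin n) (Fin n) ℂ) :
    Matrix (Fin n) (Fin n) ℂ :=
  if h : A.IsHermitian then
    (h.eigenvectorUnitary : Matrix (Fin n) (Fin n) ℂ) *
      Matrix.diagonal (fun i => (f (h.eigenvalues i) : ℂ)) *
      (star (h.eigenvectorUnitary : Matrix (Fin n) (Fin n) ℂ))
  else 0

/-- `f : (0,∞) → (0,∞)` is operator monotone. -/
def OperatorMonotone (f : ℝ → ℝ) : Prop :=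
  (∀ x : ℝ, 0 < x → 0 < f x) ∧
  ∀ (n : ℕ) (A B : Matrix (Fin n) (Fin n) ℂ), A.PosDef → B.PosDef →
    (B - A).PosSemidef → (herCFC f B - herCFC f A).PosSemidef

/-- `T` is completely positive and trace non-increasing. -/
def IsCPTNI {n m : ℕ} (T : Matrix (Fin n) (Fin n) ℂ → Matrix (Fin m) (Fin m) ℂ) : Prop :=
  ∃ (k : ℕ) (A : Fin k → Matrix (Fin m) (Fin n) ℂ),
    (∀ X, T X = ∑ i, A i * X * (A i)ᴴ) ∧
    ((1 : Matrix (Fin n) (Fin n) ℂ) - ∑ i, (A i)ᴴ * A i).PosSemidef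

/-- `K` is an inner product on the space of `n × n` complex matrices. -/
def IsInnerProduct {n : ℕ}
    (K : Matrix (Fin n) (Fin n) ℂ → Matrix (Fin n) (Fin n) ℂ → ℂ) : Prop :=
  (∀ X Y Z, K (X + Y) Z = K X Z + K Y Z) ∧
  (∀ X Y Z, K X (Y + Z) = K X Y + K X Z) ∧
  (∀ (c : ℂ) (X Y : Matrix (Fin n) (Fin n) ℂ), K X (c • Y) = c * K X Y) ∧
  (∀ (c : ℂ) (X Y : Matrix (Fin n) (Fin n) ℂ), K (c • X) Y = (starRingEnd ℂ) c * K X Y) ∧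
  (∀ X Y, K Y X = (starRingEnd ℂ) (K X Y)) ∧
  (∀ X, X ≠ 0 → 0 < (K X X).re)

/-- A family of CPTNI monotone metrics. -/
def MonotoneMetricFamily
    (K : (n : ℕ) → Matrix (Fin n) (Fin n) ℂ →
      Matrix (Fin n) (Fin n) ℂ → Matrix (Fin n) (Fin n) ℂ → ℂ) : Prop :=
  (∀ (n : ℕ) (ρ : Matrix (Fin n) (Fin n) ℂ), ρ.PosDef → ρ.trace.re ≤ 1 →
    IsInnerProduct (K n ρ)) ∧
  (∀ (n m : ℕ) (T : Matrix (Fin n) (Fin n) ℂ → Matrix (Fin m) (Fin m) ℂ), IsCPTNI T →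
    ∀ (σ : Matrix (Fin m) (Fin m) ℂ), σ.PosSemidef →
    ∀ (ρ : Matrix (Fin n) (Fin n) ℂ), ρ.PosDef → ρ.trace.re ≤ 1 →
    (T ρ + σ).PosDef → (T ρ + σ).trace.re ≤ 1 →
    ∀ (X : Matrix (Fin n) (Fin n) ℂ),
      (K m (T ρ + σ) (T X) (T X)).re ≤ (K n ρ X X).re)

/-!
Monotonicity is the defining inequality for the identity channel with `σ = ρ' - ρ`.

For convexity, write `A ⊕ B` for the block-diagonal state on `ℂⁿ ⊕ ℂⁿ`. Embedding a block and
compressing onto it are both CPTNI, and the compression onto the first block discards the second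
block of `Z ⊕ t W` for every real `t`; hence `K_{A ⊕ B}(Z ⊕ W) = K_A(Z) + K_B(W)`. The partial trace
`A ⊕ B ↦ A + B` then gives joint subadditivity `K_{A+B}(Z+W) ≤ K_A(Z) + K_B(W)`, which with
`A = pρ₁, B = (1-p)ρ₂, Z = pX, W = (1-p)X` reduces convexity to `K_{pρ}(pX) ≤ p K_ρ(X)`.
For this last bound put `a = K_{pρ}(X)`, `b = K_{(1-p)ρ}(X)`. The channel `ρ ↦ pρ ⊕ (1-p)ρ` gives
`p²a + (1-p)²b ≤ K_ρ(X)`, while subadditivity for `ρ = pρ + (1-p)ρ` gives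
`K_ρ(X) ≤ s²a + (1-s)²b` for every `s`. So `s = p` minimises `s²a + (1-s)²b`, forcing
`pa = (1-p)b` and hence `pa = p²a + (1-p)²b ≤ K_ρ(X)`.
-/

namespace Matrix

variable {n : ℕ}

def inclFst (n : ℕ) : Matrix (Fin (n + n)) (Fin n) ℂ :=
  (fromRows 1 0).submatrix finSumFinEquiv.symm id

def inclSnd (n : ℕ) : Matrix (Fin (n + n)) (Fin n) ℂ :=
  (fromRows 0 1).submatrix finSumFinEquiv.symm id

@[simp]
lemma conjTranspose_inclFst_mul_inclFst : (inclFst n)ᴴ * inclFst n = 1 := by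
  simp [inclFst, conjTranspose_submatrix, conjTranspose_fromRows_eq_fromCols_conjTranspose,
    fromCols_mul_fromRows]

@[simp]
lemma conjTranspose_inclSnd_mul_inclSnd : (inclSnd n)ᴴ * inclSnd n = 1 := by
  simp [inclSnd, conjTranspose_submatrix, conjTranspose_fromRows_eq_fromCols_conjTranspose,
    fromCols_mul_fromRows]

@[simp]
lemma conjTranspose_inclFst_mul_inclSnd : (inclFst n)ᴴ * inclSnd n = 0 := by
  simp [inclFst, inclSnd, conjTranspose_submatrix,
    conjTranspose_fromRows_eq_fromCols_conjTranspose, fromCols_mul_fromRows]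

@[simp]
lemma conjTranspose_inclSnd_mul_inclFst : (inclSnd n)ᴴ * inclFst n = 0 := by
  simp [inclFst, inclSnd, conjTranspose_submatrix,
    conjTranspose_fromRows_eq_fromCols_conjTranspose, fromCols_mul_fromRows]

lemma inclFst_mul_conjTranspose_add_inclSnd_mul_conjTranspose :
    inclFst n * (inclFst n)ᴴ + inclSnd n * (inclSnd n)ᴴ = 1 := by
  simp only [inclFst, inclSnd, conjTranspose_submatrix,
    conjTranspose_fromRows_eq_fromCols_conjTranspose,
    ← submatrix_mul _ _ _ _ _ Function.bijective_id, fromRows_mul_fromCols]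
  rw [show ∀ A B : Matrix (Fin n ⊕ Fin n) (Fin n ⊕ Fin n) ℂ,
      A.submatrix finSumFinEquiv.symm finSumFinEquiv.symm
        + B.submatrix finSumFinEquiv.symm finSumFinEquiv.symm
        = (A + B).submatrix finSumFinEquiv.symm finSumFinEquiv.symm from fun _ _ => rfl,
    fromBlocks_add]
  simp [fromBlocks_one]

@[simp]
lemma mul_conjTranspose_inclFst_mul_inclFst {l : ℕ} (M : Matrix (Fin l) (Fin n) ℂ) :
    M * (inclFst n)ᴴ * inclFst n = M := by
  rw [Matrix.mul_assoc, conjTranspose_inclFst_mul_inclFst, Matrix.mul_one]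

@[simp]
lemma mul_conjTranspose_inclSnd_mul_inclSnd {l : ℕ} (M : Matrix (Fin l) (Fin n) ℂ) :
    M * (inclSnd n)ᴴ * inclSnd n = M := by
  rw [Matrix.mul_assoc, conjTranspose_inclSnd_mul_inclSnd, Matrix.mul_one]

@[simp]
lemma mul_conjTranspose_inclFst_mul_inclSnd {l : ℕ} (M : Matrix (Fin l) (Fin n) ℂ) :
    M * (inclFst n)ᴴ * inclSnd n = 0 := by
  rw [Matrix.mul_assoc, conjTranspose_inclFst_mul_inclSnd, Matrix.mul_zero]

@[simp]
lemma mul_conjTranspose_inclSnd_mul_inclFst {l : ℕ} (M : Matrix (Fin l) (Fin n) ℂ) :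
    M * (inclSnd n)ᴴ * inclFst n = 0 := by
  rw [Matrix.mul_assoc, conjTranspose_inclSnd_mul_inclFst, Matrix.mul_zero]

/-- The block-diagonal matrix `A ⊕ B`. -/
def dsum (A B : Matrix (Fin n) (Fin n) ℂ) : Matrix (Fin (n + n)) (Fin (n + n)) ℂ :=
  inclFst n * A * (inclFst n)ᴴ + inclSnd n * B * (inclSnd n)ᴴ

lemma conjTranspose_inclFst_mul_dsum_mul (A B : Matrix (Fin n) (Fin n) ℂ) :
    (inclFst n)ᴴ * dsum A B * inclFst n = A := by
  simp [dsum, Matrix.mul_add, ← Matrix.mul_assoc]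

lemma conjTranspose_inclSnd_mul_dsum_mul (A B : Matrix (Fin n) (Fin n) ℂ) :
    (inclSnd n)ᴴ * dsum A B * inclSnd n = B := by
  simp [dsum, Matrix.mul_add, ← Matrix.mul_assoc]

lemma dsum_add_dsum (A B C D : Matrix (Fin n) (Fin n) ℂ) :
    dsum A B + dsum C D = dsum (A + C) (B + D) := by
  simp only [dsum, Matrix.mul_add, Matrix.add_mul]
  abel

lemma dsum_sub_dsum (A B C D : Matrix (Fin n) (Fin n) ℂ) :
    dsum A B - dsum C D = dsum (A - C) (B - D) := by
  simp only [dsum, Matrix.mul_sub, Matrix.sub_mul]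
  abel

lemma smul_dsum (c : ℂ) (A B : Matrix (Fin n) (Fin n) ℂ) :
    c • dsum A B = dsum (c • A) (c • B) := by
  simp [dsum, smul_add]

lemma dsum_mul_dsum (A B C D : Matrix (Fin n) (Fin n) ℂ) :
    dsum A B * dsum C D = dsum (A * C) (B * D) := by
  simp [dsum, Matrix.mul_add, Matrix.add_mul, ← Matrix.mul_assoc]

lemma conjTranspose_dsum (A B : Matrix (Fin n) (Fin n) ℂ) : (dsum A B)ᴴ = dsum Aᴴ Bᴴ := by
  simp [dsum, Matrix.mul_assoc]

lemma dsum_one_one : dsum (1 : Matrix (Fin n) (Fin n) ℂ) 1 = 1 := by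
  simpa [dsum] using inclFst_mul_conjTranspose_add_inclSnd_mul_conjTranspose

lemma trace_dsum (A B : Matrix (Fin n) (Fin n) ℂ) : (dsum A B).trace = A.trace + B.trace := by
  simp [dsum, trace_mul_comm _ (inclFst n)ᴴ, trace_mul_comm _ (inclSnd n)ᴴ, ← Matrix.mul_assoc]

lemma PosSemidef.re_trace_nonneg {m : Type*} [Fintype m] {A : Matrix m m ℂ}
    (hA : A.PosSemidef) : 0 ≤ A.trace.re :=
  (Complex.nonneg_iff.mp hA.trace_nonneg).1

lemma PosSemidef.dsum {A B : Matrix (Fin n) (Fin n) ℂ} (hA : A.PosSemidef) (hB : B.PosSemidef) :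
    (dsum A B).PosSemidef :=
  (hA.mul_mul_conjTranspose_same _).add (hB.mul_mul_conjTranspose_same _)

lemma PosDef.dsum {A B : Matrix (Fin n) (Fin n) ℂ} (hA : A.PosDef) (hB : B.PosDef) :
    (dsum A B).PosDef := by
  refine (hA.posSemidef.dsum hB.posSemidef).posDef_iff_isUnit.mpr
    ((isUnit_iff_isUnit_det _).mpr (isUnit_det_of_right_inverse (B := Matrix.dsum A⁻¹ B⁻¹) ?_))
  rw [dsum_mul_dsum, mul_nonsing_inv _ ((isUnit_iff_isUnit_det _).mp hA.isUnit),
    mul_nonsing_inv _ ((isUnit_iff_isUnit_det _).mp hB.isUnit), dsum_one_one]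

lemma posSemidef_one_sub_mul_conjTranspose {m l : Type*} [Fintype m] [Fintype l] [DecidableEq m]
    [DecidableEq l] {V : Matrix m l ℂ} (hV : Vᴴ * V = 1) : (1 - V * Vᴴ).PosSemidef := by
  have hproj : (1 - V * Vᴴ)ᴴ * (1 - V * Vᴴ) = 1 - V * Vᴴ := by
    simp only [conjTranspose_sub, conjTranspose_one, conjTranspose_mul, conjTranspose_conjTranspose,
      Matrix.sub_mul, Matrix.mul_sub, Matrix.one_mul, Matrix.mul_one]
    rw [Matrix.mul_assoc V, ← Matrix.mul_assoc Vᴴ, hV, Matrix.one_mul]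
    abel
  exact hproj ▸ posSemidef_conjTranspose_mul_self _

end Matrix

lemma isCPTNI_conj {n m : ℕ} (V : Matrix (Fin m) (Fin n) ℂ)
    (hV : ((1 : Matrix (Fin n) (Fin n) ℂ) - Vᴴ * V).PosSemidef) :
    IsCPTNI (fun X : Matrix (Fin n) (Fin n) ℂ => V * X * Vᴴ) :=
  ⟨1, ![V], fun X => by simp, by simpa using hV⟩

lemma isCPTNI_conj_add_conj {n m : ℕ} (V W : Matrix (Fin m) (Fin n) ℂ)
    (hVW : ((1 : Matrix (Fin n) (Fin n) ℂ) - (Vᴴ * V + Wᴴ * W)).PosSemidef) :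
    IsCPTNI (fun X : Matrix (Fin n) (Fin n) ℂ => V * X * Vᴴ + W * X * Wᴴ) :=
  ⟨2, ![V, W], fun X => by simp [Fin.sum_univ_two], by simpa [Fin.sum_univ_two] using hVW⟩

lemma ofReal_smul_add_ofReal_one_sub_smul {M : Type*} [AddCommGroup M] [Module ℂ M] (p : ℝ)
    (x : M) : (p : ℂ) • x + ((1 - p : ℝ) : ℂ) • x = x := by
  rw [← add_smul, ← Complex.ofReal_add, add_sub_cancel, Complex.ofReal_one, one_smul]

lemma ofReal_sqrt_smul_mul_mul_conjTranspose_ofReal_sqrt_smul {m n l : Type*} [Fintype n]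
    [Fintype l] {c : ℝ} (hc : 0 ≤ c) (V : Matrix m n ℂ) (Z : Matrix n l ℂ) (W : Matrix m l ℂ) :
    ((√c : ℂ) • V) * Z * ((√c : ℂ) • W)ᴴ = (c : ℂ) • (V * Z * Wᴴ) := by
  rw [conjTranspose_smul, Complex.star_def, Complex.conj_ofReal, Matrix.smul_mul, Matrix.smul_mul,
    Matrix.mul_smul, smul_smul, ← Complex.ofReal_mul, Real.mul_self_sqrt hc]

namespace IsInnerProduct

variable {n : ℕ} {K : Matrix (Fin n) (Fin n) ℂ → Matrix (Fin n) (Fin n) ℂ → ℂ}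

lemma zero_left (hK : IsInnerProduct K) (Y : Matrix (Fin n) (Fin n) ℂ) : K 0 Y = 0 := by
  simpa using hK.1 0 0 Y

lemma re_ofReal_smul_self (hK : IsInnerProduct K) (t : ℝ) (X : Matrix (Fin n) (Fin n) ℂ) :
    (K ((t : ℂ) • X) ((t : ℂ) • X)).re = t ^ 2 * (K X X).re := by
  rw [hK.2.2.1, hK.2.2.2.1, Complex.conj_ofReal, ← mul_assoc, ← Complex.ofReal_mul,
    Complex.re_ofReal_mul, sq]

lemma re_add_ofReal_smul_self (hK : IsInnerProduct K) (X Y : Matrix (Fin n) (Fin n) ℂ) (t : ℝ) :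
    (K (X + (t : ℂ) • Y) (X + (t : ℂ) • Y)).re
      = (K X X).re + 2 * t * (K X Y).re + t ^ 2 * (K Y Y).re := by
  simp only [hK.1, hK.2.1, hK.2.2.1, hK.2.2.2.1, hK.2.2.2.2.1 X Y, Complex.conj_ofReal,
    Complex.add_re, Complex.re_ofReal_mul, Complex.conj_re]
  ring

lemma re_self_nonneg (hK : IsInnerProduct K) (X : Matrix (Fin n) (Fin n) ℂ) :
    0 ≤ (K X X).re := by
  rcases eq_or_ne X 0 with rfl | hX
  · simp [hK.zero_left]
  · exact (hK.2.2.2.2.2 X hX).le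

lemma re_eq_zero_of_forall_le (hK : IsInnerProduct K) {X Y : Matrix (Fin n) (Fin n) ℂ}
    (h : ∀ t : ℝ, (K X X).re ≤ (K (X + (t : ℂ) • Y) (X + (t : ℂ) • Y)).re) :
    (K X Y).re = 0 := by
  set r := (K X Y).re
  set c := (K Y Y).re
  have hc : 0 ≤ c := hK.re_self_nonneg Y
  have ht := h (-r / (c + 1))
  rw [hK.re_add_ofReal_smul_self] at ht
  have hr : r ^ 2 * (c + 2) ≤ 0 := by
    field_simp at ht
    nlinarith
  nlinarith [sq_nonneg r]

end IsInnerProduct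

lemma mul_le_of_sq_mul_add_sq_mul_le {a b k p : ℝ} (ha : 0 ≤ a) (hb : 0 ≤ b)
    (hlow : p ^ 2 * a + (1 - p) ^ 2 * b ≤ k) (hup : ∀ s, k ≤ s ^ 2 * a + (1 - s) ^ 2 * b) :
    p * a ≤ k := by
  rcases (add_nonneg ha hb).eq_or_lt with hab | hab
  · nlinarith
  -- `s = b / (a + b)` minimises the upper bound, with minimum `a b / (a + b)`
  have hmin := hup (b / (a + b))
  have hval : (b / (a + b)) ^ 2 * a + (1 - b / (a + b)) ^ 2 * b = a * b / (a + b) := by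
    field_simp
    ring
  rw [hval, le_div_iff₀ hab] at hmin
  have hcrit : p * a = (1 - p) * b := by
    nlinarith [sq_nonneg (p * a - (1 - p) * b), mul_le_mul_of_nonneg_right hlow hab.le]
  nlinarith

namespace MonotoneMetricFamily

variable {K : (n : ℕ) → Matrix (Fin n) (Fin n) ℂ →
  Matrix (Fin n) (Fin n) ℂ → Matrix (Fin n) (Fin n) ℂ → ℂ}

lemma le_of_isCPTNI (hK : MonotoneMetricFamily K) {n m : ℕ}
    {T : Matrix (Fin n) (Fin n) ℂ → Matrix (Fin m) (Fin m) ℂ} (hT : IsCPTNI T)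
    {σ : Matrix (Fin m) (Fin m) ℂ} (hσ : σ.PosSemidef)
    {ρ : Matrix (Fin n) (Fin n) ℂ} (hρ : ρ.PosDef) (hρtr : ρ.trace.re ≤ 1)
    {ρ' : Matrix (Fin m) (Fin m) ℂ} (hρ' : ρ'.PosDef) (hρ'tr : ρ'.trace.re ≤ 1)
    (hTρ : T ρ + σ = ρ') {X : Matrix (Fin n) (Fin n) ℂ} {Y : Matrix (Fin m) (Fin m) ℂ}
    (hTX : T X = Y) : (K m ρ' Y Y).re ≤ (K n ρ X X).re := by
  subst hTρ hTX
  exact hK.2 n m T hT σ hσ ρ hρ hρtr hρ' hρ'tr X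

lemma re_apply_conj_isometry (hK : MonotoneMetricFamily K) {n m : ℕ}
    {V : Matrix (Fin m) (Fin n) ℂ} (hV : Vᴴ * V = 1)
    {ρ : Matrix (Fin n) (Fin n) ℂ} (hρ : ρ.PosDef) (hρtr : ρ.trace.re ≤ 1)
    {ρ' : Matrix (Fin m) (Fin m) ℂ} (hρ' : ρ'.PosDef) (hρ'tr : ρ'.trace.re ≤ 1)
    (hdom : (ρ' - V * ρ * Vᴴ).PosSemidef) (hcomp : Vᴴ * ρ' * V = ρ)
    (X : Matrix (Fin n) (Fin n) ℂ) :
    (K m ρ' (V * X * Vᴴ) (V * X * Vᴴ)).re = (K n ρ X X).re := by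
  refine le_antisymm
    (hK.le_of_isCPTNI (isCPTNI_conj V (by simpa [hV] using PosSemidef.zero)) hdom hρ hρtr
      hρ' hρ'tr (add_sub_cancel _ _) rfl) ?_
  refine hK.le_of_isCPTNI (isCPTNI_conj Vᴴ ?_) PosSemidef.zero hρ' hρ'tr hρ hρtr ?_ ?_
  · simpa using posSemidef_one_sub_mul_conjTranspose hV
  · simpa using hcomp
  · simp [← Matrix.mul_assoc, hV, Matrix.mul_assoc _ Vᴴ V]

lemma re_apply_dsum (hK : MonotoneMetricFamily K) {n : ℕ} {A B : Matrix (Fin n) (Fin n) ℂ}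
    (hA : A.PosDef) (hB : B.PosDef) (htr : A.trace.re + B.trace.re ≤ 1)
    (Z W : Matrix (Fin n) (Fin n) ℂ) :
    (K (n + n) (dsum A B) (dsum Z W) (dsum Z W)).re = (K n A Z Z).re + (K n B W W).re := by
  have hAtr : A.trace.re ≤ 1 := by linarith [hB.posSemidef.re_trace_nonneg]
  have hBtr : B.trace.re ≤ 1 := by linarith [hA.posSemidef.re_trace_nonneg]
  have hD : (dsum A B).PosDef := hA.dsum hB
  have hDtr : (dsum A B).trace.re ≤ 1 := by rwa [trace_dsum, Complex.add_re]
  have hfst : (K (n + n) (dsum A B) (dsum Z 0) (dsum Z 0)).re = (K n A Z Z).re := by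
    simpa [dsum] using hK.re_apply_conj_isometry conjTranspose_inclFst_mul_inclFst hA hAtr hD hDtr
      (by simpa [dsum] using hB.posSemidef.mul_mul_conjTranspose_same (inclSnd n))
      (conjTranspose_inclFst_mul_dsum_mul A B) Z
  have hsnd : (K (n + n) (dsum A B) (dsum 0 W) (dsum 0 W)).re = (K n B W W).re := by
    simpa [dsum] using hK.re_apply_conj_isometry conjTranspose_inclSnd_mul_inclSnd hB hBtr hD hDtr
      (by simpa [dsum] using hA.posSemidef.mul_mul_conjTranspose_same (inclFst n))
      (conjTranspose_inclSnd_mul_dsum_mul A B) W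
  have hIP := hK.1 _ _ hD hDtr
  -- compressing onto the first block keeps `Z ⊕ 0` and discards `0 ⊕ t W`, so `Z ⊕ 0 ⟂ 0 ⊕ W`
  have hcross : (K (n + n) (dsum A B) (dsum Z 0) (dsum 0 W)).re = 0 := by
    have hP : (dsum 1 0 : Matrix (Fin (n + n)) (Fin (n + n)) ℂ)ᴴ = dsum 1 0 := by
      simp [conjTranspose_dsum]
    refine hIP.re_eq_zero_of_forall_le fun t => ?_
    refine hK.le_of_isCPTNI (σ := dsum 0 B) (isCPTNI_conj (dsum 1 0) ?_)
      (PosSemidef.zero.dsum hB.posSemidef) hD hDtr hD hDtr ?_ ?_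
    · rw [hP, dsum_mul_dsum, ← dsum_one_one, dsum_sub_dsum]
      simpa using PosSemidef.zero.dsum PosSemidef.one
    · simp [hP, dsum_mul_dsum, dsum_add_dsum]
    · rw [hP, smul_dsum, dsum_add_dsum, dsum_mul_dsum, dsum_mul_dsum]
      simp
  have hsum := hIP.re_add_ofReal_smul_self (dsum Z 0) (dsum 0 W) 1
  simp only [Complex.ofReal_one, one_smul, dsum_add_dsum, add_zero, zero_add] at hsum
  rw [hsum, hcross, hfst, hsnd]
  ring

lemma re_apply_add_le (hK : MonotoneMetricFamily K) {n : ℕ} {A B : Matrix (Fin n) (Fin n) ℂ}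
    (hA : A.PosDef) (hB : B.PosDef) (htr : A.trace.re + B.trace.re ≤ 1)
    (Z W : Matrix (Fin n) (Fin n) ℂ) :
    (K n (A + B) (Z + W) (Z + W)).re ≤ (K n A Z Z).re + (K n B W W).re := by
  rw [← hK.re_apply_dsum hA hB htr]
  refine hK.le_of_isCPTNI (isCPTNI_conj_add_conj (inclFst n)ᴴ (inclSnd n)ᴴ ?_) PosSemidef.zero
    (hA.dsum hB) (by rwa [trace_dsum, Complex.add_re]) (hA.add hB)
    (by rwa [trace_add, Complex.add_re]) ?_ ?_
  · simpa [inclFst_mul_conjTranspose_add_inclSnd_mul_conjTranspose] using PosSemidef.zero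
  · simp [conjTranspose_inclFst_mul_dsum_mul, conjTranspose_inclSnd_mul_dsum_mul]
  · simp [conjTranspose_inclFst_mul_dsum_mul, conjTranspose_inclSnd_mul_dsum_mul]

lemma re_apply_dsum_smul_le (hK : MonotoneMetricFamily K) {n : ℕ}
    {ρ : Matrix (Fin n) (Fin n) ℂ} (hρ : ρ.PosDef) (htr : ρ.trace.re ≤ 1)
    (X : Matrix (Fin n) (Fin n) ℂ) {p : ℝ} (hp0 : 0 < p) (hp1 : p < 1) :
    (K (n + n) (dsum ((p : ℂ) • ρ) (((1 - p : ℝ) : ℂ) • ρ))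
      (dsum ((p : ℂ) • X) (((1 - p : ℝ) : ℂ) • X))
      (dsum ((p : ℂ) • X) (((1 - p : ℝ) : ℂ) • X))).re ≤ (K n ρ X X).re := by
  have hq0 : 0 < 1 - p := sub_pos.2 hp1
  refine hK.le_of_isCPTNI
    (isCPTNI_conj_add_conj ((√p : ℂ) • inclFst n) ((√(1 - p) : ℂ) • inclSnd n) ?_)
    PosSemidef.zero hρ htr
    ((hρ.smul (by exact_mod_cast hp0)).dsum (hρ.smul (by exact_mod_cast hq0))) ?_ ?_ ?_
  · simp only [conjTranspose_smul, Complex.star_def, Complex.conj_ofReal, Matrix.smul_mul,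
      Matrix.mul_smul, smul_smul, ← Complex.ofReal_mul, Real.mul_self_sqrt hp0.le,
      Real.mul_self_sqrt hq0.le, conjTranspose_inclFst_mul_inclFst,
      conjTranspose_inclSnd_mul_inclSnd, ofReal_smul_add_ofReal_one_sub_smul, sub_self]
    exact PosSemidef.zero
  · simpa [trace_dsum, trace_smul, ← add_mul] using htr
  all_goals
    simp only [ofReal_sqrt_smul_mul_mul_conjTranspose_ofReal_sqrt_smul hp0.le,
      ofReal_sqrt_smul_mul_mul_conjTranspose_ofReal_sqrt_smul hq0.le, add_zero]
    simp only [dsum, Matrix.mul_smul, Matrix.smul_mul]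

lemma re_apply_smul_smul_le (hK : MonotoneMetricFamily K) {n : ℕ}
    {ρ : Matrix (Fin n) (Fin n) ℂ} (hρ : ρ.PosDef) (htr : ρ.trace.re ≤ 1)
    (X : Matrix (Fin n) (Fin n) ℂ) {p : ℝ} (hp0 : 0 < p) (hp1 : p < 1) :
    (K n ((p : ℂ) • ρ) ((p : ℂ) • X) ((p : ℂ) • X)).re ≤ p * (K n ρ X X).re := by
  have hq0 : 0 < 1 - p := sub_pos.2 hp1
  have htr0 : 0 ≤ ρ.trace.re := hρ.posSemidef.re_trace_nonneg
  have hpρ : ((p : ℂ) • ρ).PosDef := hρ.smul (by exact_mod_cast hp0)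
  have hqρ : (((1 - p : ℝ) : ℂ) • ρ).PosDef := hρ.smul (by exact_mod_cast hq0)
  have htrpq : ((p : ℂ) • ρ).trace.re + (((1 - p : ℝ) : ℂ) • ρ).trace.re ≤ 1 := by
    simpa [trace_smul, ← add_mul] using htr
  have hIPp := hK.1 n _ hpρ (by rw [trace_smul, smul_eq_mul, Complex.re_ofReal_mul]; nlinarith)
  have hIPq := hK.1 n _ hqρ (by rw [trace_smul, smul_eq_mul, Complex.re_ofReal_mul]; nlinarith)
  have hsplit := hK.re_apply_dsum_smul_le hρ htr X hp0 hp1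
  rw [hK.re_apply_dsum hpρ hqρ htrpq, hIPp.re_ofReal_smul_self, hIPq.re_ofReal_smul_self] at hsplit
  have hmerge : ∀ s : ℝ, (K n ρ X X).re ≤
      s ^ 2 * (K n ((p : ℂ) • ρ) X X).re + (1 - s) ^ 2 * (K n (((1 - p : ℝ) : ℂ) • ρ) X X).re := by
    intro s
    have h := hK.re_apply_add_le hpρ hqρ htrpq ((s : ℂ) • X) (((1 - s : ℝ) : ℂ) • X)
    rwa [ofReal_smul_add_ofReal_one_sub_smul, ofReal_smul_add_ofReal_one_sub_smul,
      hIPp.re_ofReal_smul_self, hIPq.re_ofReal_smul_self] at h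
  rw [hIPp.re_ofReal_smul_self, sq, mul_assoc]
  exact mul_le_mul_of_nonneg_left (mul_le_of_sq_mul_add_sq_mul_le (hIPp.re_self_nonneg X)
    (hIPq.re_self_nonneg X) hsplit hmerge) hp0.le

lemma re_apply_le_of_sub_posSemidef (hK : MonotoneMetricFamily K) {n : ℕ}
    {ρ ρ' : Matrix (Fin n) (Fin n) ℂ} (hρ : ρ.PosDef) (hρ' : ρ'.PosDef) (htr' : ρ'.trace.re ≤ 1)
    (hσ : (ρ' - ρ).PosSemidef) (X : Matrix (Fin n) (Fin n) ℂ) :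
    (K n ρ' X X).re ≤ (K n ρ X X).re := by
  have htr : ρ.trace.re ≤ 1 := by
    have := hσ.re_trace_nonneg
    rw [trace_sub, Complex.sub_re] at this
    linarith
  exact hK.le_of_isCPTNI (isCPTNI_conj 1 (by simpa using PosSemidef.zero)) hσ hρ htr hρ' htr'
    (by simp) (by simp)

lemma re_apply_convexComb_le (hK : MonotoneMetricFamily K) {n : ℕ}
    {ρ₁ ρ₂ : Matrix (Fin n) (Fin n) ℂ} (h₁ : ρ₁.PosDef) (h₂ : ρ₂.PosDef)
    (htr₁ : ρ₁.trace.re ≤ 1) (htr₂ : ρ₂.trace.re ≤ 1) (X : Matrix (Fin n) (Fin n) ℂ) {p : ℝ}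
    (hp0 : 0 ≤ p) (hp1 : p ≤ 1) :
    (K n ((p : ℂ) • ρ₁ + ((1 - p : ℝ) : ℂ) • ρ₂) X X).re ≤
      p * (K n ρ₁ X X).re + (1 - p) * (K n ρ₂ X X).re := by
  rcases hp0.eq_or_lt with rfl | hp0
  · simp
  rcases hp1.eq_or_lt with rfl | hp1
  · simp
  have hq0 : 0 < 1 - p := sub_pos.2 hp1
  have htr : ((p : ℂ) • ρ₁).trace.re + (((1 - p : ℝ) : ℂ) • ρ₂).trace.re ≤ 1 := by
    simp only [trace_smul, smul_eq_mul, Complex.re_ofReal_mul]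
    nlinarith
  have hsub := hK.re_apply_add_le (h₁.smul (by exact_mod_cast hp0))
    (h₂.smul (by exact_mod_cast hq0)) htr ((p : ℂ) • X) (((1 - p : ℝ) : ℂ) • X)
  rw [ofReal_smul_add_ofReal_one_sub_smul] at hsub
  linarith [hK.re_apply_smul_smul_le h₁ htr₁ X hp0 hp1,
    hK.re_apply_smul_smul_le h₂ htr₂ X hq0 (sub_lt_self 1 hp0)]

end MonotoneMetricFamily

/-- for fixed `X`, the map `ρ ↦ K ρ X X` is monotonically decreasing and
convex on positive definite matrices with trace at most one. -/
theorem stmt11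
    (K : (n : ℕ) → Matrix (Fin n) (Fin n) ℂ →
      Matrix (Fin n) (Fin n) ℂ → Matrix (Fin n) (Fin n) ℂ → ℂ)
    (hK : MonotoneMetricFamily K)
    (n : ℕ) (X : Matrix (Fin n) (Fin n) ℂ) :
    (∀ (ρ ρ' : Matrix (Fin n) (Fin n) ℂ), ρ.PosDef → ρ'.PosDef → ρ'.trace.re ≤ 1 →
      (ρ' - ρ).PosSemidef → (K n ρ' X X).re ≤ (K n ρ X X).re) ∧
    (∀ (ρ₁ ρ₂ : Matrix (Fin n) (Fin n) ℂ) (p : ℝ),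
      ρ₁.PosDef → ρ₂.PosDef → ρ₁.trace.re ≤ 1 → ρ₂.trace.re ≤ 1 →
      0 ≤ p → p ≤ 1 →
      (K n (((p : ℝ) : ℂ) • ρ₁ + (((1 - p : ℝ)) : ℂ) • ρ₂) X X).re ≤
        p * (K n ρ₁ X X).re + (1 - p) * (K n ρ₂ X X).re) :=
  ⟨fun _ _ hρ hρ' htr' hσ => hK.re_apply_le_of_sub_posSemidef hρ hρ' htr' hσ X,
   fun _ _ _ h₁ h₂ htr₁ htr₂ hp0 hp1 => hK.re_apply_convexComb_le h₁ h₂ htr₁ htr₂ X hp0 hp1⟩
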